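/- arXiv:1703.08601 — 6 statements merged into one kernel-verified Lean document; each statement's English description precedes it below -/
import Mathlib

section
/- For every integer k ≥ 1, the series σ_k := Σ_{n=1}^∞ |G_n|/(n+k) satisfies σ_k = 1/k + Σ_{m=1}^k (-1)^m · C(k,m) · ln(m+1). -/
/-!
Integrating the binomial series `(1 + z) ^ x = ∑ Ring.choose x n * z ^ n` over `x ∈ [0, 1]` gives
`z / log (1 + z)`, so by uniqueness of power-series coefficients `G n = ∫₀¹ Ring.choose x n dx`. On `[0, 1]` the sign of
`Ring.choose x (n + 1)` is `(-1) ^ n`, hence `|G (n + 1)| = (-1) ^ n * G (n + 1)` and, evaluating the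
generating function at `z = -t`, `∑ |G (n + 1)| t ^ (n + 1) = 1 + t / log (1 - t)` on `(0, 1)`.
Multiplying by `t ^ (k - 1)` and integrating over `(0, 1)`,
`σ_k = 1 / k + ∫₀¹ t ^ k / log (1 - t) dt`. Finally
`t ^ k = ∑ₘ (-1) ^ m C(k, m) ((1 - t) ^ m - 1)` and `∫₀¹ (u ^ s - 1) / log u du = log (s + 1)`,
the latter by writing the integrand as `∫₀ˢ u ^ r dr` and exchanging the integrals.
-/

open Real Finset MeasureTheory intervalIntegral

theorem Ring.choose_succ_eq_mul_div {K : Type*} [Field K] [CharZero K] (x : K) (n : ℕ) :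
    Ring.choose x (n + 1) = Ring.choose x n * ((x - n) / (n + 1)) := by
  rw [Ring.choose_eq_smul, Ring.choose_eq_smul, descPochhammer_succ_right, Polynomial.smeval_mul,
    Polynomial.smeval_sub, Polynomial.smeval_X, Polynomial.smeval_natCast, Nat.factorial_succ]
  simp only [smul_eq_mul, pow_one, pow_zero, nsmul_eq_mul, mul_one]
  push_cast
  field_simp

theorem continuous_ring_choose (n : ℕ) : Continuous fun x : ℝ => Ring.choose x n := by
  induction n with
  | zero => simpa using continuous_const
  | succ n ih =>
    simp only [Ring.choose_succ_eq_mul_div]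
    fun_prop

theorem abs_ring_choose_le_one {x : ℝ} (hx : x ∈ Set.Icc 0 1) (n : ℕ) :
    |Ring.choose x n| ≤ 1 := by
  induction n with
  | zero => simp
  | succ n ih =>
    have hfactor : |(x - n) / (n + 1)| ≤ 1 := by
      rw [abs_div, abs_of_pos (by positivity : (0:ℝ) < n + 1), div_le_one (by positivity), abs_le]
      constructor <;> linarith [hx.1, hx.2]
    rw [Ring.choose_succ_eq_mul_div, abs_mul]
    exact mul_le_one₀ ih (abs_nonneg _) hfactor

theorem neg_one_pow_mul_ring_choose_succ_nonneg {x : ℝ} (hx : x ∈ Set.Icc 0 1) (n : ℕ) :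
    0 ≤ (-1) ^ n * Ring.choose x (n + 1) := by
  induction n with
  | zero => simpa [Ring.choose_one_right] using hx.1
  | succ n ih =>
    have hfactor : 0 ≤ (n + 1 - x) / (n + 2) := div_nonneg (by linarith [hx.2]) (by positivity)
    calc (0:ℝ) ≤ (-1) ^ n * Ring.choose x (n + 1) * ((n + 1 - x) / (n + 2)) :=
          mul_nonneg ih hfactor
      _ = (-1) ^ (n + 1) * Ring.choose x (n + 1 + 1) := by
          rw [Ring.choose_succ_eq_mul_div x (n + 1)]; push_cast; ring

theorem mem_eball_zero_one_iff {z : ℝ} : z ∈ Metric.eball (0 : ℝ) 1 ↔ |z| < 1 := by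
  rw [← ENNReal.ofReal_one, Metric.eball_ofReal, Metric.mem_ball, dist_zero_right,
    Real.norm_eq_abs]

theorem Real.hasSum_ring_choose_mul_pow (a : ℝ) {z : ℝ} (hz : |z| < 1) :
    HasSum (fun n => Ring.choose a n * z ^ n) ((1 + z) ^ a) := by
  have := Real.one_add_rpow_hasFPowerSeriesOnBall_zero (a := a) |>.hasSum
    (mem_eball_zero_one_iff.2 hz)
  simpa [binomialSeries, FormalMultilinearSeries.ofScalars_apply_eq, mul_comm] using this

theorem hasFPowerSeriesOnBall_ofScalars_of_hasSum {a : ℕ → ℝ} {f : ℝ → ℝ}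
    (h : ∀ z : ℝ, |z| < 1 → HasSum (fun n => a n * z ^ n) (f z)) :
    HasFPowerSeriesOnBall f (FormalMultilinearSeries.ofScalars ℝ a) 0 1 where
  r_le := by
    refine ENNReal.le_of_forall_nnreal_lt fun r hr => ?_
    refine FormalMultilinearSeries.le_radius_of_tendsto _ (l := 0) ?_
    have hr' : |(r : ℝ)| < 1 := by
      rw [NNReal.abs_eq]; exact_mod_cast hr
    simpa [FormalMultilinearSeries.ofScalars_norm] using (h r hr').summable.tendsto_atTop_zero.norm
  r_pos := one_pos
  hasSum {y} hy := by
    rw [mem_eball_zero_one_iff] at hy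
    simpa [FormalMultilinearSeries.ofScalars_apply_eq, mul_comm] using h y hy

theorem eq_of_hasSum_mul_pow {a b : ℕ → ℝ} {f : ℝ → ℝ}
    (ha : ∀ z : ℝ, |z| < 1 → HasSum (fun n => a n * z ^ n) (f z))
    (hb : ∀ z : ℝ, |z| < 1 → HasSum (fun n => b n * z ^ n) (f z)) : a = b :=
  FormalMultilinearSeries.ofScalars_series_injective ℝ ℝ <|
    (hasFPowerSeriesOnBall_ofScalars_of_hasSum ha).hasFPowerSeriesAt.eq_formalMultilinearSeries
      (hasFPowerSeriesOnBall_ofScalars_of_hasSum hb).hasFPowerSeriesAt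

theorem integral_const_rpow {a : ℝ} (ha : 0 < a) (ha₁ : a ≠ 1) (b : ℝ) :
    ∫ x in (0:ℝ)..b, a ^ x = (a ^ b - 1) / log a := by
  have hlog : log a ≠ 0 := log_ne_zero_of_pos_of_ne_one ha ha₁
  simp_rw [rpow_def_of_pos ha, mul_comm (log a)]
  rw [integral_comp_mul_right (fun x => exp x) hlog, integral_exp]
  simp only [zero_mul, exp_zero, smul_eq_mul]
  field_simp

theorem integral_one_add_rpow {z : ℝ} (hz : -1 < z) (hz₀ : z ≠ 0) :
    ∫ x in (0:ℝ)..1, (1 + z) ^ x = z / log (1 + z) := by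
  rw [integral_const_rpow (by linarith) (by simpa using hz₀), rpow_one, add_sub_cancel_left]

noncomputable def gregory (n : ℕ) : ℝ := ∫ x in (0:ℝ)..1, Ring.choose x n

theorem gregory_zero : gregory 0 = 1 := by simp [gregory]

theorem hasSum_gregory_mul_pow {z : ℝ} (hz : |z| < 1) :
    HasSum (fun n => gregory n * z ^ n) (∫ x in (0:ℝ)..1, (1 + z) ^ x) := by
  simp only [gregory, ← intervalIntegral.integral_mul_const]
  refine intervalIntegral.hasSum_integral_of_dominated_convergence (fun n _ => |z| ^ n)
    (fun n => ((continuous_ring_choose n).mul continuous_const).aestronglyMeasurable)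
    (fun n => ae_of_all _ fun x hx => ?_)
    (ae_of_all _ fun _ _ => summable_geometric_of_lt_one (abs_nonneg z) hz)
    intervalIntegrable_const (ae_of_all _ fun x _ => Real.hasSum_ring_choose_mul_pow x hz)
  rw [Set.uIoc_of_le zero_le_one] at hx
  rw [norm_mul, norm_pow, Real.norm_eq_abs, Real.norm_eq_abs]
  exact mul_le_of_le_one_left (by positivity) (abs_ring_choose_le_one ⟨hx.1.le, hx.2⟩ n)

theorem abs_gregory_succ (n : ℕ) : |gregory (n + 1)| = (-1) ^ n * gregory (n + 1) := by
  have hnonneg : 0 ≤ (-1) ^ n * gregory (n + 1) := by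
    rw [gregory, ← intervalIntegral.integral_const_mul]
    exact intervalIntegral.integral_nonneg zero_le_one
      fun x hx => neg_one_pow_mul_ring_choose_succ_nonneg hx n
  rw [← abs_of_nonneg hnonneg, abs_mul, abs_pow, abs_neg, abs_one, one_pow, one_mul]

theorem eq_gregory_of_generatingFunction {G : ℕ → ℝ}
    (hG : ∀ z : ℝ, |z| < 1 → z ≠ 0 →
      z / log (1 + z) = 1 + ∑' n : ℕ, G (n + 1) * z ^ (n + 1)) (n : ℕ) :
    G (n + 1) = gregory (n + 1) := by
  suffices (fun n => if n = 0 then 1 else G n) = gregory by simpa using congrFun this (n + 1)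
  refine eq_of_hasSum_mul_pow (fun z hz => ?_) fun z hz => hasSum_gregory_mul_pow hz
  rcases eq_or_ne z 0 with rfl | hz₀
  · simpa using hasSum_single (f := fun n => (if n = 0 then 1 else G n) * (0:ℝ) ^ n) 0
      fun n hn => by simp [hn]
  have h1z : 0 < 1 + z := by linarith [(abs_lt.1 hz).1]
  have hsum := hG z hz hz₀
  -- a divergent series would have `tsum` equal to `0`, but `z / log (1 + z) ≠ 1`
  have hsummable : Summable fun n => G (n + 1) * z ^ (n + 1) := by
    by_contra hdiv
    rw [tsum_eq_zero_of_not_summable hdiv, add_zero, div_eq_one_iff_eq] at hsum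
    · linarith [log_lt_sub_one_of_pos h1z (by simpa using hz₀)]
    · intro hlog; simp [hlog] at hsum
  rw [integral_one_add_rpow (by linarith) hz₀, hsum, ← hasSum_nat_add_iff' 1]
  simpa [add_sub_cancel_left] using hsummable.hasSum

theorem hasSum_abs_gregory_succ_mul_pow {t : ℝ} (ht : t ∈ Set.Ioo 0 1) :
    HasSum (fun n => |gregory (n + 1)| * t ^ (n + 1)) (1 + t / log (1 - t)) := by
  have hsum := hasSum_gregory_mul_pow (z := -t) (by rw [abs_neg, abs_of_pos ht.1]; exact ht.2)
  rw [← hasSum_nat_add_iff' 1, integral_one_add_rpow (by linarith [ht.2]) (by linarith [ht.1])]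
    at hsum
  have hval : 1 + t / log (1 - t) =
      -(-t / log (1 + -t) - ∑ i ∈ range 1, gregory i * (-t) ^ i) := by
    simp only [sum_range_one, gregory_zero, pow_zero, ← sub_eq_add_neg]
    ring
  rw [hval]
  refine hsum.neg.congr_fun fun n => ?_
  rw [abs_gregory_succ, neg_pow t, pow_succ (-1 : ℝ)]
  ring

theorem hasSum_abs_gregory_succ_mul_pow_add {k : ℕ} (hk : k ≠ 0) {t : ℝ}
    (ht : t ∈ Set.Ioo 0 1) :
    HasSum (fun n => |gregory (n + 1)| * t ^ (n + k)) (t ^ (k - 1) + t ^ k / log (1 - t)) := by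
  have hpow : ∀ j, t ^ (k - 1) * t ^ (j + 1) = t ^ (j + k) := fun j => by
    rw [← pow_add]; congr 1; omega
  have hval : t ^ (k - 1) + t ^ k / log (1 - t) = t ^ (k - 1) * (1 + t / log (1 - t)) := by
    rw [mul_add, mul_one, mul_div_assoc', ← pow_succ,
      Nat.sub_add_cancel (Nat.one_le_iff_ne_zero.2 hk)]
  rw [hval]
  exact ((hasSum_abs_gregory_succ_mul_pow ht).mul_left _).congr_fun fun n => by rw [← hpow]; ring

theorem integrable_uncurry_rpow (s : ℝ) :
    Integrable (Function.uncurry fun u r : ℝ => u ^ r)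
      ((volume.restrict (Set.Ioc 0 1)).prod (volume.restrict (Set.Ioc 0 s))) := by
  refine Integrable.mono' (integrable_const 1)
    (measurable_fst.pow measurable_snd).aestronglyMeasurable ?_
  rw [Measure.prod_restrict, ae_restrict_iff' (measurableSet_Ioc.prod measurableSet_Ioc)]
  refine ae_of_all _ fun p hp => ?_
  change ‖p.1 ^ p.2‖ ≤ 1
  rw [Real.norm_of_nonneg (rpow_nonneg hp.1.1.le _)]
  exact rpow_le_one hp.1.1.le hp.1.2 hp.2.1.le

theorem eqOn_integral_rpow_exponent (s : ℝ) :
    Set.EqOn (fun u => ∫ r in (0:ℝ)..s, u ^ r) (fun u => (u ^ s - 1) / log u)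
      (Set.uIoo 0 1) := by
  intro u hu
  rw [Set.uIoo_of_le zero_le_one] at hu
  exact integral_const_rpow hu.1 hu.2.ne s

theorem intervalIntegrable_rpow_sub_one_div_log {s : ℝ} (hs : 0 ≤ s) :
    IntervalIntegrable (fun u => (u ^ s - 1) / log u) volume 0 1 := by
  refine IntervalIntegrable.congr_uIoo ?_ (eqOn_integral_rpow_exponent s)
  rw [intervalIntegrable_iff_integrableOn_Ioc_of_le zero_le_one]
  simp only [intervalIntegral.integral_of_le hs]
  exact (integrable_uncurry_rpow s).integral_prod_left

theorem integral_rpow_sub_one_div_log {s : ℝ} (hs : 0 ≤ s) :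
    ∫ u in (0:ℝ)..1, (u ^ s - 1) / log u = log (s + 1) := by
  rw [← integral_congr_uIoo (eqOn_integral_rpow_exponent s)]
  calc ∫ u in (0:ℝ)..1, ∫ r in (0:ℝ)..s, u ^ r
      = ∫ r in (0:ℝ)..s, ∫ u in (0:ℝ)..1, u ^ r := by
        simp only [intervalIntegral.integral_of_le hs, intervalIntegral.integral_of_le zero_le_one]
        exact integral_integral_swap (integrable_uncurry_rpow s)
    _ = ∫ r in (0:ℝ)..s, 1 / (r + 1) := by
        refine integral_congr fun r hr => ?_
        rw [Set.uIcc_of_le hs] at hr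
        simp [integral_rpow (Or.inl (by linarith [hr.1] : (-1:ℝ) < r)),
          zero_rpow (by linarith [hr.1] : r + 1 ≠ 0)]
    _ = log (s + 1) := by
        rw [intervalIntegral.integral_comp_add_right (fun r => 1 / r), integral_one_div]
        · simp
        · rw [Set.uIcc_of_le (by linarith)]; simp

theorem pow_eq_sum_neg_one_pow_mul_choose_mul_one_sub_pow_sub_one {R : Type*} [CommRing R]
    {k : ℕ} (hk : k ≠ 0) (t : R) :
    t ^ k = ∑ m ∈ range (k + 1), (-1) ^ m * (k.choose m : R) * ((1 - t) ^ m - 1) := by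
  have hzero : ∑ m ∈ range (k + 1), (-1) ^ m * (k.choose m : R) = 0 := by
    simpa using congrArg (Int.cast : ℤ → R) (Int.alternating_sum_range_choose_of_ne hk)
  have hbinom := add_pow (t - 1) 1 k
  rw [sub_add_cancel] at hbinom
  simp only [mul_sub, sum_sub_distrib, mul_one, hzero, sub_zero, hbinom, one_pow]
  exact sum_congr rfl fun m _ => by rw [show t - 1 = -1 * (1 - t) by ring, mul_pow]; ring

theorem pow_div_log_one_sub_eq_sum {k : ℕ} (hk : k ≠ 0) :
    (fun t : ℝ => t ^ k / log (1 - t)) = fun t => ∑ m ∈ range (k + 1),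
      (-1) ^ m * (k.choose m : ℝ) * (((1 - t) ^ m - 1) / log (1 - t)) := by
  ext t
  rw [pow_eq_sum_neg_one_pow_mul_choose_mul_one_sub_pow_sub_one hk t, sum_div]
  simp only [mul_div_assoc]

theorem intervalIntegrable_one_sub_pow_sub_one_div_log (m : ℕ) :
    IntervalIntegrable (fun t : ℝ => ((1 - t) ^ m - 1) / log (1 - t)) volume 0 1 := by
  have := (intervalIntegrable_rpow_sub_one_div_log (Nat.cast_nonneg m)).comp_sub_left 1
  simpa using this.symm

theorem intervalIntegrable_pow_div_log_one_sub {k : ℕ} (hk : k ≠ 0) :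
    IntervalIntegrable (fun t : ℝ => t ^ k / log (1 - t)) volume 0 1 := by
  rw [pow_div_log_one_sub_eq_sum hk]
  simpa only [Finset.sum_fn] using IntervalIntegrable.sum (range (k + 1)) fun m _ =>
    (intervalIntegrable_one_sub_pow_sub_one_div_log m).const_mul ((-1) ^ m * (k.choose m : ℝ))

theorem integral_pow_div_log_one_sub {k : ℕ} (hk : k ≠ 0) :
    ∫ t in (0:ℝ)..1, t ^ k / log (1 - t) =
      ∑ m ∈ range (k + 1), (-1) ^ m * (k.choose m : ℝ) * log (m + 1) := by
  rw [pow_div_log_one_sub_eq_sum hk, intervalIntegral.integral_finsetSum fun m _ =>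
    (intervalIntegrable_one_sub_pow_sub_one_div_log m).const_mul _]
  refine sum_congr rfl fun m _ => ?_
  rw [intervalIntegral.integral_const_mul,
    intervalIntegral.integral_comp_sub_left (fun u => (u ^ m - 1) / log u)]
  have h := integral_rpow_sub_one_div_log (Nat.cast_nonneg m)
  simp only [rpow_natCast] at h
  simp only [sub_self, sub_zero, h]

theorem hasSum_abs_gregory_succ_div {k : ℕ} (hk : k ≠ 0) :
    HasSum (fun n : ℕ => |gregory (n + 1)| / ((n : ℝ) + 1 + k))
      (∫ t in (0:ℝ)..1, t ^ (k - 1) + t ^ k / log (1 - t)) := by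
  have hlim : ∀ᵐ t, t ∈ Set.uIoc (0:ℝ) 1 → HasSum (fun n => |gregory (n + 1)| * t ^ (n + k))
      (t ^ (k - 1) + t ^ k / log (1 - t)) := by
    filter_upwards [Measure.ae_ne volume 1] with t ht₁ ht
    rw [Set.uIoc_of_le zero_le_one] at ht
    exact hasSum_abs_gregory_succ_mul_pow_add hk ⟨ht.1, lt_of_le_of_ne ht.2 ht₁⟩
  have hintegral : ∀ n : ℕ, ∫ t in (0:ℝ)..1, |gregory (n + 1)| * t ^ (n + k) =
      |gregory (n + 1)| / ((n : ℝ) + 1 + k) := fun n => by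
    rw [intervalIntegral.integral_const_mul, integral_pow]
    push_cast
    ring
  simp only [← hintegral]
  -- the terms are nonnegative, so they dominate themselves
  refine intervalIntegral.hasSum_integral_of_dominated_convergence
    (fun n t => |gregory (n + 1)| * t ^ (n + k))
    (fun n => (by fun_prop : Continuous _).aestronglyMeasurable)
    (fun n => ae_of_all _ fun t ht => ?_) (hlim.mono fun t h ht => (h ht).summable) ?_ hlim
  · rw [Set.uIoc_of_le zero_le_one] at ht
    rw [Real.norm_of_nonneg (by have := ht.1; positivity)]
  · refine ((intervalIntegrable_pow (k - 1)).add
      (intervalIntegrable_pow_div_log_one_sub hk)).congr_uIoo fun t ht => ?_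
    rw [Set.uIoo_of_le zero_le_one] at ht
    exact (hasSum_abs_gregory_succ_mul_pow_add hk ht).tsum_eq.symm

theorem integral_pow_sub_one_add_pow_div_log_one_sub {k : ℕ} (hk : k ≠ 0) :
    ∫ t in (0:ℝ)..1, t ^ (k - 1) + t ^ k / log (1 - t) =
      1 / k + ∑ m ∈ range (k + 1), (-1) ^ m * (k.choose m : ℝ) * log (m + 1) := by
  rw [intervalIntegral.integral_add (intervalIntegrable_pow _)
    (intervalIntegrable_pow_div_log_one_sub hk), integral_pow, integral_pow_div_log_one_sub hk]
  simp [Nat.cast_sub (Nat.one_le_iff_ne_zero.2 hk)]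

/-- For every integer `k ≥ 1`, the series `σ_k = Σ_{n=1}^∞ |G_n|/(n+k)` equals
`1/k + Σ_{m=1}^k (-1)^m C(k,m) ln(m+1)`, where the `G_n` are the Gregory
coefficients, defined by the generating function `z/ln(1+z) = 1 + Σ_{n≥1} G_n zⁿ`. -/
theorem stmt0 (G : ℕ → ℝ)
    (hG : ∀ z : ℝ, |z| < 1 → z ≠ 0 →
      z / Real.log (1 + z) = 1 + ∑' n : ℕ, G (n + 1) * z ^ (n + 1)) :
    ∀ k : ℕ, 1 ≤ k →
      ∑' n : ℕ, |G (n + 1)| / ((n : ℝ) + 1 + k) =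
        1 / (k : ℝ) + ∑ m ∈ Finset.Icc 1 k,
          (-1 : ℝ) ^ m * (k.choose m : ℝ) * Real.log ((m : ℝ) + 1) := by
  intro k hk
  have hk₀ : k ≠ 0 := Nat.one_le_iff_ne_zero.1 hk
  simp only [eq_gregory_of_generatingFunction hG]
  rw [(hasSum_abs_gregory_succ_div hk₀).tsum_eq, integral_pow_sub_one_add_pow_div_log_one_sub hk₀,
    range_eq_Ico, sum_eq_sum_Ico_succ_bot (by omega : 0 < k + 1), zero_add,
    Ico_add_one_right_eq_Icc]
  simp
end

section
/- Euler's constant γ equals the sum of the Fontana–Mascheroni series: γ = Σ_{n=1}^∞ |G_n|/n. -/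
/-!
Write `a n = |G (n + 1)|`. The Gregory coefficients alternate in sign, so after `z = -t` the
defining identity reads `∑ a n * tⁿ = 1 / t + 1 / log (1 - t)` for `0 < t < 1`, a power series
with positive coefficients (positivity comes from the recursion that the identity imposes on `a`).
Integrating termwise over `(0, 1)` turns the Fontana–Mascheroni series into
`∫₀¹ (1 / t + 1 / log (1 - t)) dt`. On the other hand
`H_N - log (N + 1) = ∫₀¹ (1 - (1 - t) ^ N) (1 / t + 1 / log (1 - t)) dt`: the first part is a
geometric sum, and `∫₀¹ (1 - u ^ N) / (-log u) du = ∫₀ᴺ ∫₀¹ uˢ du ds = log (N + 1)` by Tonelli.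
Letting `N → ∞` by dominated convergence identifies the integral with `γ`.
-/

open Real Filter Topology MeasureTheory Set

theorem eq_of_hasSum_mul_pow_s4 {𝕜 : Type*} [NontriviallyNormedField 𝕜] [CompleteSpace 𝕜]
    {b c : ℕ → 𝕜} {F : 𝕜 → 𝕜}
    (hb : ∀ᶠ z in 𝓝[≠] 0, HasSum (fun n => b n * z ^ n) (F z))
    (hc : ∀ᶠ z in 𝓝[≠] 0, HasSum (fun n => c n * z ^ n) (F z)) : b = c := by
  have hzero : ∀ᶠ z in 𝓝[≠] 0, HasSum (fun n => (b - c) n * z ^ n) 0 := by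
    filter_upwards [hb, hc] with z hbz hcz
    simpa [sub_mul] using hbz.sub hcz
  set p := FormalMultilinearSeries.ofScalars 𝕜 (b - c)
  have hsum : ∀ᶠ z in 𝓝[≠] 0, p.sum z = 0 := by
    filter_upwards [hzero] with z hz
    exact (FormalMultilinearSeries.ofScalars_sum_eq _ z).trans (by simpa using hz.tsum_eq)
  obtain ⟨z, hz, hz0⟩ := (hzero.and self_mem_nhdsWithin).exists
  obtain ⟨C, hC⟩ := (hz.summable.tendsto_atTop_zero.norm).bddAbove_range
  have hrad : 0 < p.radius := by
    refine lt_of_lt_of_le ?_ (p.le_radius_of_bound C (r := ‖z‖₊) fun n => ?_)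
    · simpa using hz0
    · simpa [p, norm_mul, norm_pow] using hC (mem_range_self n)
  have hp : HasFPowerSeriesAt p.sum p 0 := (p.hasFPowerSeriesOnBall hrad).hasFPowerSeriesAt
  have hlocal : p.sum =ᶠ[𝓝 0] 0 :=
    hp.analyticAt.frequently_zero_iff_eventually_zero.mp hsum.frequently
  exact sub_eq_zero.mp ((FormalMultilinearSeries.ofScalars_series_eq_zero 𝕜).mp
    (hp.eq_zero_of_eventually hlocal))

theorem integral_Ioo_one_sub_rpow {s : ℝ} (hs : -1 < s) :
    ∫ t in Ioo 0 1, (1 - t) ^ s = 1 / (s + 1) := by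
  rw [← integral_Ioc_eq_integral_Ioo, ← intervalIntegral.integral_of_le zero_le_one,
    intervalIntegral.integral_comp_sub_left (fun u => u ^ s), integral_rpow (Or.inl hs)]
  simp [zero_rpow (by linarith : s + 1 ≠ 0)]

theorem one_sub_one_sub_pow_div_eq_sum {t : ℝ} (ht : t ≠ 0) (N : ℕ) :
    (1 - (1 - t) ^ N) / t = ∑ k ∈ Finset.range N, (1 - t) ^ k := by
  rw [div_eq_iff ht, mul_comm]
  simpa using (mul_neg_geom_sum (1 - t) N).symm

theorem integrableOn_one_sub_pow (k : ℕ) : IntegrableOn (fun t : ℝ => (1 - t) ^ k) (Ioo 0 1) :=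
  (by fun_prop : Continuous fun t : ℝ => (1 - t) ^ k).integrableOn_Icc.mono_set Ioo_subset_Icc_self

theorem integrableOn_one_sub_one_sub_pow_div (N : ℕ) :
    IntegrableOn (fun t : ℝ => (1 - (1 - t) ^ N) / t) (Ioo 0 1) :=
  IntegrableOn.congr_fun (integrable_finsetSum _ fun k _ => integrableOn_one_sub_pow k)
    (fun _ ht => (one_sub_one_sub_pow_div_eq_sum ht.1.ne' N).symm) measurableSet_Ioo

theorem integral_Ioo_one_sub_one_sub_pow_div (N : ℕ) :
    ∫ t in Ioo 0 1, (1 - (1 - t) ^ N) / t = (harmonic N : ℝ) := by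
  rw [setIntegral_congr_fun measurableSet_Ioo fun _ ht => one_sub_one_sub_pow_div_eq_sum ht.1.ne' N,
    integral_finsetSum _ fun k _ => integrableOn_one_sub_pow k, harmonic]
  push_cast
  refine Finset.sum_congr rfl fun k _ => ?_
  simpa [← rpow_natCast, one_div] using
    integral_Ioo_one_sub_rpow (s := k) (by linarith [k.cast_nonneg (α := ℝ)])

theorem integral_Ioo_const_rpow {u x : ℝ} (hu0 : 0 < u) (hu1 : u ≠ 1) (hx : 0 ≤ x) :
    ∫ s in Ioo 0 x, u ^ s = (u ^ x - 1) / log u := by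
  have hlog : log u ≠ 0 := log_ne_zero_of_pos_of_ne_one hu0 hu1
  rw [← integral_Ioc_eq_integral_Ioo, ← intervalIntegral.integral_of_le hx,
    intervalIntegral.integral_eq_sub_of_hasDerivAt (f := fun s => u ^ s / log u)
      (fun s _ => by
        simpa [hlog] using (hasStrictDerivAt_const_rpow hu0 s).hasDerivAt.div_const (log u))
      (continuous_const_rpow hu0.ne' |>.intervalIntegrable _ _)]
  simp [sub_div]

theorem integrable_one_sub_rpow_prod (x : ℝ) :
    Integrable (fun p : ℝ × ℝ => (1 - p.1) ^ p.2)
      ((volume.restrict (Ioo 0 1)).prod (volume.restrict (Ioo 0 x))) := by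
  refine .of_bound ((measurable_const.sub measurable_fst).pow measurable_snd).aestronglyMeasurable
    1 ?_
  rw [Measure.prod_restrict, ae_restrict_iff' (measurableSet_Ioo.prod measurableSet_Ioo)]
  refine ae_of_all _ fun p ⟨ht, hs⟩ => ?_
  rw [norm_of_nonneg (rpow_nonneg (by linarith [ht.2]) _)]
  exact rpow_le_one (by linarith [ht.2]) (by linarith [ht.1]) hs.1.le

theorem integral_Ioo_rpow_eq_div_neg_log {x t : ℝ} (hx : 0 ≤ x) (ht : t ∈ Ioo (0 : ℝ) 1) :
    ∫ s in Ioo 0 x, (1 - t) ^ s = (1 - (1 - t) ^ x) / -log (1 - t) := by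
  rw [integral_Ioo_const_rpow (by linarith [ht.2]) (by linarith [ht.1]) hx, div_neg, ← neg_div,
    neg_sub]

theorem integrableOn_one_sub_rpow_div_neg_log {x : ℝ} (hx : 0 ≤ x) :
    IntegrableOn (fun t => (1 - (1 - t) ^ x) / -log (1 - t)) (Ioo 0 1) :=
  IntegrableOn.congr_fun (integrable_one_sub_rpow_prod x).integral_prod_left
    (fun _ ht => integral_Ioo_rpow_eq_div_neg_log hx ht) measurableSet_Ioo

theorem integral_Ioo_one_sub_rpow_div_neg_log {x : ℝ} (hx : 0 ≤ x) :
    ∫ t in Ioo 0 1, (1 - (1 - t) ^ x) / -log (1 - t) = log (1 + x) := calc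
  _ = ∫ t in Ioo 0 1, ∫ s in Ioo 0 x, (1 - t) ^ s :=
    (setIntegral_congr_fun measurableSet_Ioo fun _ ht =>
      integral_Ioo_rpow_eq_div_neg_log hx ht).symm
  _ = ∫ s in Ioo 0 x, ∫ t in Ioo 0 1, (1 - t) ^ s :=
    integral_integral_swap (integrable_one_sub_rpow_prod x)
  _ = ∫ s in Ioo 0 x, 1 / (s + 1) :=
    setIntegral_congr_fun measurableSet_Ioo fun _ hs =>
      integral_Ioo_one_sub_rpow (by linarith [hs.1])
  _ = log (1 + x) := by
    have hzero : (0 : ℝ) ∉ uIcc 1 (x + 1) := by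
      rw [mem_uIcc]
      rintro (h | h) <;> linarith [h.1, h.2]
    rw [← integral_Ioc_eq_integral_Ioo, ← intervalIntegral.integral_of_le hx,
      intervalIntegral.integral_comp_add_right (fun s => 1 / s), zero_add,
      integral_one_div hzero]
    simp [add_comm]

theorem one_div_add_one_div_log_one_sub_mem_Icc {t : ℝ} (ht : t ∈ Ioo (0 : ℝ) 1) :
    1 / t + 1 / log (1 - t) ∈ Icc 0 1 := by
  obtain ⟨ht0, ht1⟩ := ht
  have hlog_le : log (1 - t) ≤ -t := by
    linarith [log_le_sub_one_of_pos (by linarith : 0 < 1 - t)]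
  have hlog_ge : 1 - (1 - t)⁻¹ ≤ log (1 - t) := one_sub_inv_le_log_of_pos (by linarith)
  have hlog : log (1 - t) < 0 := by linarith
  rw [div_add_div _ _ ht0.ne' hlog.ne, mem_Icc, div_nonneg_iff, div_le_one_of_neg (by nlinarith)]
  refine ⟨Or.inr ⟨by linarith, by nlinarith⟩, ?_⟩
  rw [inv_eq_one_div, one_sub_div (by linarith), div_le_iff₀ (by linarith)] at hlog_ge
  nlinarith

theorem integrableOn_one_div_add_one_div_log_one_sub :
    IntegrableOn (fun t => 1 / t + 1 / log (1 - t)) (Ioo 0 1) := by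
  refine Measure.integrableOn_of_bounded (M := 1) measure_Ioo_lt_top.ne (by fun_prop) ?_
  refine (ae_restrict_iff' measurableSet_Ioo).mpr (ae_of_all _ fun t ht => ?_)
  obtain ⟨h0, h1⟩ := one_div_add_one_div_log_one_sub_mem_Icc ht
  rwa [norm_of_nonneg h0]

theorem tendsto_integral_Ioo_one_sub_one_sub_pow_mul {φ : ℝ → ℝ}
    (hφ : IntegrableOn φ (Ioo 0 1)) :
    Tendsto (fun N : ℕ => ∫ t in Ioo 0 1, (1 - (1 - t) ^ N) * φ t) atTop
      (𝓝 (∫ t in Ioo 0 1, φ t)) := by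
  refine tendsto_integral_of_dominated_convergence (fun t => ‖φ t‖)
    (fun N => (by fun_prop : Continuous fun t : ℝ => 1 - (1 - t) ^ N).aestronglyMeasurable.mul
      hφ.aestronglyMeasurable) hφ.norm (fun N => ?_) ?_
  all_goals refine (ae_restrict_iff' measurableSet_Ioo).mpr (ae_of_all _ fun t ht => ?_)
  · have h0 : 0 ≤ 1 - t := by linarith [ht.2]
    have hle := pow_le_one₀ h0 (by linarith [ht.1]) (n := N)
    rw [norm_mul, norm_of_nonneg (by linarith)]
    exact mul_le_of_le_one_left (norm_nonneg _) (by linarith [pow_nonneg h0 N])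
  · have hpow :=
      tendsto_pow_atTop_nhds_zero_of_lt_one (r := 1 - t) (by linarith [ht.2]) (by linarith [ht.1])
    simpa using (hpow.const_sub 1).mul_const (φ t)

theorem harmonic_sub_log_eq_integral (N : ℕ) :
    harmonic N - log (N + 1) =
      ∫ t in Ioo 0 1, (1 - (1 - t) ^ N) * (1 / t + 1 / log (1 - t)) := by
  have hlog := integral_Ioo_one_sub_rpow_div_neg_log (x := N) N.cast_nonneg
  have hint := integrableOn_one_sub_rpow_div_neg_log (x := N) N.cast_nonneg
  simp only [rpow_natCast] at hlog hint
  rw [← integral_Ioo_one_sub_one_sub_pow_div, add_comm, ← hlog,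
    ← integral_sub (integrableOn_one_sub_one_sub_pow_div N) hint]
  refine setIntegral_congr_fun measurableSet_Ioo fun t _ => ?_
  ring

theorem eulerMascheroniConstant_eq_integral :
    eulerMascheroniConstant = ∫ t in Ioo 0 1, (1 / t + 1 / log (1 - t)) :=
  tendsto_nhds_unique (tendsto_harmonic_sub_log_add_one.congr harmonic_sub_log_eq_integral)
    (tendsto_integral_Ioo_one_sub_one_sub_pow_mul integrableOn_one_div_add_one_div_log_one_sub)

section Gregory

open Finset

/-- `absGregory n` stands for `|G (n + 1)|`. The recursion says that the coefficient of `tⁿ⁺¹` in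
`(∑ tⁱ / (i + 1)) * (1 - ∑ absGregory k * tᵏ⁺¹)` vanishes; the two factors are `-log (1 - t) / t`
and the defining series of `z / log (1 + z)` at `z = -t`. -/
noncomputable def absGregory (n : ℕ) : ℝ :=
  1 / (n + 2) - ∑ k : Fin n, absGregory k / (n + 1 - k)
decreasing_by exact k.isLt

theorem absGregory_eq (n : ℕ) :
    absGregory n = 1 / (n + 2) - ∑ k ∈ range n, absGregory k / (n + 1 - k) := by
  rw [absGregory, Fin.sum_univ_eq_sum_range (fun k => absGregory k / (n + 1 - k))]

theorem sum_range_succ_absGregory_div (n : ℕ) :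
    ∑ k ∈ range (n + 1), absGregory k / (n + 1 - k) = 1 / (n + 2) := by
  rw [sum_range_succ, absGregory_eq n]
  ring

theorem absGregory_pos (n : ℕ) : 0 < absGregory n := by
  induction n using Nat.strong_induction_on with
  | _ n ih =>
  rcases n with _ | m
  · norm_num [absGregory_eq]
  have hterm : ∀ k ∈ range (m + 1), absGregory k / ((m + 1 : ℕ) + 1 - k) <
      (m + 2) / (m + 3) * (absGregory k / (m + 1 - k)) := by
    intro k hk
    have hkm : (k : ℝ) ≤ m := by exact_mod_cast Nat.lt_succ_iff.mp (mem_range.mp hk)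
    have ha := ih k (mem_range.mp hk)
    push_cast
    rw [div_mul_div_comm, div_lt_div_iff₀ (by linarith) (by nlinarith)]
    nlinarith
  have hsum := sum_lt_sum_of_nonempty nonempty_range_add_one hterm
  rw [← mul_sum, sum_range_succ_absGregory_div] at hsum
  have hlast : (m + 2 : ℝ) / (m + 3) * (1 / (m + 2)) = 1 / ((m + 1 : ℕ) + 2) := by
    push_cast
    field_simp
    ring
  rw [absGregory_eq]
  linarith

theorem absGregory_le (n : ℕ) : absGregory n ≤ 1 / (n + 2) := by
  rw [absGregory_eq]
  refine sub_le_self _ (sum_nonneg fun k hk => div_nonneg (absGregory_pos k).le ?_)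
  have : (k : ℝ) + 1 ≤ n := by exact_mod_cast mem_range.mp hk
  linarith

theorem absGregory_le_one (n : ℕ) : absGregory n ≤ 1 :=
  (absGregory_le n).trans <| by
    rw [div_le_one (by positivity)]
    linarith [n.cast_nonneg (α := ℝ)]

theorem summable_absGregory_div : Summable fun n : ℕ => absGregory n / (n + 1) := by
  have hsq : Summable fun n : ℕ => 1 / ((n : ℝ) + 1) ^ 2 := by
    simpa using (summable_nat_add_iff 1).mpr (summable_one_div_nat_pow.mpr one_lt_two)
  refine hsq.of_nonneg_of_le (fun n => div_nonneg (absGregory_pos n).le (by positivity))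
    fun n => ?_
  calc absGregory n / (n + 1) ≤ 1 / ((n : ℝ) + 1) / (n + 1) := by
        gcongr
        exact (absGregory_le n).trans (by gcongr; linarith)
    _ = 1 / ((n : ℝ) + 1) ^ 2 := by rw [div_div, sq]

theorem summable_norm_absGregory_mul_pow {t : ℝ} (ht : |t| < 1) :
    Summable fun n => ‖absGregory n * t ^ n‖ := by
  refine (summable_geometric_of_lt_one (abs_nonneg t) ht).of_nonneg_of_le
    (fun n => norm_nonneg _) fun n => ?_
  rw [norm_mul, norm_pow, norm_of_nonneg (absGregory_pos n).le, norm_eq_abs]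
  exact mul_le_of_le_one_left (by positivity) (absGregory_le_one n)

theorem sum_range_absGregory_mul_pow_mul_pow_div (t : ℝ) (n : ℕ) :
    ∑ k ∈ range (n + 1), absGregory k * t ^ k * (t ^ (n - k + 1) / ((n - k : ℕ) + 1)) =
      t ^ (n + 1) / (n + 2) := by
  rw [div_eq_mul_one_div, ← sum_range_succ_absGregory_div, mul_sum]
  refine sum_congr rfl fun k hk => ?_
  have hkn := Nat.lt_succ_iff.mp (mem_range.mp hk)
  have hpow : t ^ k * t ^ (n - k + 1) = t ^ (n + 1) := by
    rw [← pow_add]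
    congr 1
    omega
  rw [Nat.cast_sub hkn, ← hpow]
  field_simp
  ring

theorem hasSum_absGregory_mul_pow {t : ℝ} (ht : |t| < 1) (ht0 : t ≠ 0) :
    HasSum (fun n => absGregory n * t ^ n) (1 / t + 1 / log (1 - t)) := by
  have hlog := hasSum_pow_div_log_of_abs_lt_one ht
  have hlog_norm : Summable fun n : ℕ => ‖t ^ (n + 1) / (n + 1)‖ := by
    refine (summable_geometric_of_lt_one (abs_nonneg t) ht).of_nonneg_of_le
      (fun n => norm_nonneg _) fun n => ?_
    rw [norm_div, norm_pow, norm_eq_abs, norm_of_nonneg (by positivity)]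
    calc |t| ^ (n + 1) / (n + 1) ≤ |t| ^ (n + 1) :=
          div_le_self (by positivity) (by linarith [n.cast_nonneg (α := ℝ)])
      _ ≤ |t| ^ n := pow_le_pow_of_le_one (abs_nonneg t) ht.le n.le_succ
  have hprod := hasSum_sum_range_mul_of_summable_norm (summable_norm_absGregory_mul_pow ht)
    hlog_norm
  rw [hlog.tsum_eq] at hprod
  have hshift : HasSum (fun n : ℕ => t ^ (n + 1) / (n + 2)) ((-log (1 - t) - t) / t) := by
    rw [← hasSum_nat_add_iff' 1, sum_range_one] at hlog
    norm_num at hlog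
    refine (hlog.div_const t).congr_fun fun n => ?_
    field_simp
    ring
  have hlog0 : log (1 - t) ≠ 0 := by
    have := abs_lt.mp ht
    exact log_ne_zero_of_pos_of_ne_one (by linarith) (by intro h; apply ht0; linarith)
  have key := (hprod.congr_fun fun n =>
    (sum_range_absGregory_mul_pow_mul_pow_div t n).symm).unique hshift
  rw [(summable_norm_absGregory_mul_pow ht).of_norm.hasSum_iff]
  field_simp at key ⊢
  linear_combination -key

theorem integral_one_div_add_one_div_log_one_sub_eq_tsum :
    ∫ t in Ioo 0 1, (1 / t + 1 / log (1 - t)) = ∑' n : ℕ, absGregory n / (n + 1) := by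
  have hint (n : ℕ) : IntegrableOn (fun t : ℝ => absGregory n * t ^ n) (Ioo 0 1) :=
    (by fun_prop : Continuous fun t : ℝ => absGregory n * t ^ n).integrableOn_Icc.mono_set
      Ioo_subset_Icc_self
  have hterm (n : ℕ) : ∫ t in Ioo 0 1, absGregory n * t ^ n = absGregory n / (n + 1) := by
    rw [integral_const_mul, ← integral_Ioc_eq_integral_Ioo,
      ← intervalIntegral.integral_of_le zero_le_one, integral_pow]
    simp [div_eq_mul_inv]
  have hnorm (n : ℕ) : ∫ t in Ioo 0 1, ‖absGregory n * t ^ n‖ = absGregory n / (n + 1) := by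
    rw [← hterm]
    refine setIntegral_congr_fun measurableSet_Ioo fun t ht => norm_of_nonneg ?_
    exact mul_nonneg (absGregory_pos n).le (pow_nonneg ht.1.le n)
  calc ∫ t in Ioo 0 1, (1 / t + 1 / log (1 - t))
      = ∫ t in Ioo 0 1, ∑' n, absGregory n * t ^ n :=
        setIntegral_congr_fun measurableSet_Ioo fun t ht =>
          (hasSum_absGregory_mul_pow (abs_lt.mpr ⟨by linarith [ht.1], ht.2⟩)
            ht.1.ne').tsum_eq.symm
    _ = ∑' n : ℕ, ∫ t in Ioo 0 1, absGregory n * t ^ n :=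
        (integral_tsum_of_summable_integral_norm hint
          (summable_absGregory_div.congr fun n => (hnorm n).symm)).symm
    _ = ∑' n : ℕ, absGregory n / (n + 1) := tsum_congr hterm

theorem hasSum_neg_one_pow_mul_absGregory_mul_pow {z : ℝ} (hz : |z| < 1) (hz0 : z ≠ 0) :
    HasSum (fun n => (-1) ^ n * absGregory n * z ^ n) (1 / log (1 + z) - 1 / z) := by
  convert hasSum_absGregory_mul_pow (t := -z) (by rwa [abs_neg]) (neg_ne_zero.mpr hz0) using 1
  · ext n
    rw [neg_pow]
    ring
  · rw [sub_neg_eq_add, add_comm 1 z]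
    ring

theorem hasSum_of_div_log_one_add_eq {G : ℕ → ℝ}
    (hG : ∀ z : ℝ, |z| < 1 → z ≠ 0 → z / log (1 + z) = 1 + ∑' n : ℕ, G (n + 1) * z ^ (n + 1))
    {z : ℝ} (hz : |z| < 1) (hz0 : z ≠ 0) :
    HasSum (fun n => G (n + 1) * z ^ n) (1 / log (1 + z) - 1 / z) := by
  have h1z : 0 < 1 + z := by linarith [(abs_lt.mp hz).1]
  have h1z' : 1 + z ≠ 1 := by
    intro h
    exact hz0 (by linarith)
  -- a junk value `0` of the `tsum` would force `log (1 + z) = z`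
  have hsummable : Summable fun n => G (n + 1) * z ^ (n + 1) := by
    by_contra h
    have := hG z hz hz0
    rw [tsum_eq_zero_of_not_summable h, add_zero,
      div_eq_one_iff_eq (log_ne_zero_of_pos_of_ne_one h1z h1z')] at this
    linarith [log_lt_sub_one_of_pos h1z h1z']
  have hval : (∑' n, G (n + 1) * z ^ (n + 1)) / z = 1 / log (1 + z) - 1 / z := by
    rw [eq_sub_of_add_eq' (hG z hz hz0).symm]
    field_simp
  rw [← hval]
  exact (hsummable.hasSum.div_const z).congr_fun fun n => by
    rw [pow_succ]
    field_simp

theorem abs_eq_absGregory {G : ℕ → ℝ}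
    (hG : ∀ z : ℝ, |z| < 1 → z ≠ 0 → z / log (1 + z) = 1 + ∑' n : ℕ, G (n + 1) * z ^ (n + 1))
    (n : ℕ) : |G (n + 1)| = absGregory n := by
  have hnear : ∀ᶠ z in 𝓝[≠] (0 : ℝ), |z| < 1 ∧ z ≠ 0 := by
    filter_upwards [nhdsWithin_le_nhds (Ioo_mem_nhds neg_one_lt_zero one_pos),
      self_mem_nhdsWithin] with z hz hz0
    exact ⟨abs_lt.mpr hz, hz0⟩
  have hcoeff := congrFun (eq_of_hasSum_mul_pow_s4
    (hnear.mono fun _ hz => hasSum_of_div_log_one_add_eq hG hz.1 hz.2)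
    (hnear.mono fun _ hz => hasSum_neg_one_pow_mul_absGregory_mul_pow hz.1 hz.2)) n
  simp [hcoeff, abs_of_pos (absGregory_pos n)]

end Gregory

/-- Euler's constant `γ` equals the sum of the Fontana–Mascheroni series
`Σ_{n=1}^∞ |G_n|/n`, where the `G_n` are the Gregory coefficients, defined by
`z/ln(1+z) = 1 + Σ_{n≥1} G_n zⁿ` for `|z| < 1`. -/
theorem stmt4 (G : ℕ → ℝ)
    (hG : ∀ z : ℝ, |z| < 1 → z ≠ 0 →
      z / Real.log (1 + z) = 1 + ∑' n : ℕ, G (n + 1) * z ^ (n + 1)) :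
    Real.eulerMascheroniConstant = ∑' n : ℕ, |G (n + 1)| / ((n : ℝ) + 1) := by
  simp_rw [abs_eq_absGregory hG]
  rw [eulerMascheroniConstant_eq_integral, integral_one_div_add_one_div_log_one_sub_eq_tsum]
end

section
/- For any sequence a : ℕ → ℂ and any n ≥ 0, Σ_{l=0}^n (−1)^l C(n,l) a(l+1)/(l+1) = (1/(n+1)) Σ_{k=0}^n Σ_{l=0}^k (−1)^l C(k,l) a(l+1). -/
/-!
Exchanging the two sums, the coefficient of `a (l + 1)` on the right is
`(-1)^l ∑_{k=l}^n C(k,l) / (n+1) = (-1)^l C(n+1,l+1) / (n+1)` by the hockey-stick identity,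
and the absorption identity `(n+1) C(n,l) = (l+1) C(n+1,l+1)` turns this into `(-1)^l C(n,l) / (l+1)`.
-/

open Finset

theorem Finset.sum_range_sum_range_choose_mul {R : Type*} [CommSemiring R] (g : ℕ → R) (n : ℕ) :
    ∑ k ∈ range (n + 1), ∑ l ∈ range (k + 1), (k.choose l : R) * g l =
      ∑ l ∈ range (n + 1), ((n + 1).choose (l + 1) : R) * g l := by
  simp only [range_eq_Ico]
  rw [← sum_Ico_Ico_comm]
  refine sum_congr rfl fun l _ ↦ ?_
  rw [← sum_mul, Ico_add_one_right_eq_Icc, ← Nat.cast_sum, Nat.sum_Icc_choose]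

theorem Nat.cast_choose_div_add_one {K : Type*} [Field K] [CharZero K] (n l : ℕ) :
    (n.choose l : K) / (l + 1) = ((n + 1).choose (l + 1) : K) / (n + 1) := by
  rw [div_eq_div_iff (Nat.cast_add_one_ne_zero l) (Nat.cast_add_one_ne_zero n)]
  exact_mod_cast (mul_comm _ _).trans (Nat.add_one_mul_choose_eq n l)

/-- For any sequence `a : ℕ → ℂ` and any `n ≥ 0`,
`Σ_{l=0}^n (-1)^l C(n,l) a(l+1)/(l+1) = (1/(n+1)) Σ_{k=0}^n Σ_{l=0}^k (-1)^l C(k,l) a(l+1)`. -/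
theorem stmt11 (a : ℕ → ℂ) (n : ℕ) :
    ∑ l ∈ Finset.range (n + 1),
        (-1 : ℂ) ^ l * (n.choose l : ℂ) * a (l + 1) / ((l : ℂ) + 1) =
      (1 / ((n : ℂ) + 1)) * ∑ k ∈ Finset.range (n + 1), ∑ l ∈ Finset.range (k + 1),
        (-1 : ℂ) ^ l * (k.choose l : ℂ) * a (l + 1) := by
  have hcomm (k l : ℕ) : (-1 : ℂ) ^ l * (k.choose l : ℂ) * a (l + 1) =
      (k.choose l : ℂ) * ((-1) ^ l * a (l + 1)) := by ring
  simp only [hcomm, sum_range_sum_range_choose_mul, mul_sum]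
  refine sum_congr rfl fun l _ ↦ ?_
  rw [mul_div_right_comm, Nat.cast_choose_div_add_one]
  ring
end

section
/- For integers k ≥ 1 and m ≥ 0, the integral Ω(k,m) := ∫_0^1 ln^k(1−x)·ln^m(x)/x dx satisfies Ω(k,m) = (−1)^{m+k} m!·k! · Σ_{n=k}^∞ |S_1(n,k)|/(n!·n^{m+1}). -/
/-!
With `c(n,k)` the unsigned Stirling numbers of the first kind, `(-log (1-x))^k / k!` has the
power series `∑ₙ c(n,k) xⁿ / n!`. By induction on `k`: dividing by `1 - x` turns the coefficients
into their partial sums, integrating from `0` raises the power of `-log (1-x)`, and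
`∑_{j ≤ n} c(j,k)/j! = c(n+1,k+1)/n!`. Multiplying by `(-log x)^m / x` and integrating termwise
with `∫₀¹ x^(n-1) (-log x)^m dx = m!/n^(m+1)` gives the series; all terms are nonnegative, so
the interchange is monotone convergence. Finally `x(x-1)⋯(x-n+1)` has coefficients
`(-1)^(n+k) c(n,k)`, so `|S₁(n,k)| = c(n,k)`.
-/

open Real Finset intervalIntegral Polynomial MeasureTheory
open Nat (stirlingFirst)

theorem descPochhammer_coeff {R : Type*} [CommRing R] (n k : ℕ) :
    (descPochhammer R n).coeff k = (-1) ^ (n + k) * stirlingFirst n k := by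
  induction n generalizing k with
  | zero => cases k <;> simp [coeff_one]
  | succ n ih =>
    rw [descPochhammer_succ_right, ← C_eq_natCast, mul_sub, coeff_sub, coeff_mul_C]
    cases k with
    | zero => cases n <;> simp [ih]
    | succ k =>
      rw [coeff_mul_X, ih, ih, Nat.stirlingFirst_succ_succ]
      push_cast
      ring

theorem abs_eq_stirlingFirst_of_prod_eq {S : ℕ → ℝ} {n k : ℕ}
    (h : ∀ x : ℝ, ∏ i ∈ range n, (x - i) = ∑ l ∈ Icc 1 n, S l * x ^ l)
    (hk : 1 ≤ k) (hkn : k ≤ n) : |S k| = stirlingFirst n k := by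
  have hpoly : descPochhammer ℝ n = ∑ l ∈ Icc 1 n, C (S l) * X ^ l :=
    Polynomial.funext fun x => by simp [descPochhammer_eval_eq_prod_range, eval_finsetSum, h]
  have hcoeff := congrArg (coeff · k) hpoly
  simp only [descPochhammer_coeff, finsetSum_coeff, coeff_C_mul_X_pow] at hcoeff
  rw [Finset.sum_ite_eq, if_pos (Finset.mem_Icc.2 ⟨hk, hkn⟩)] at hcoeff
  rw [← hcoeff, abs_mul, abs_pow, abs_neg, abs_one, one_pow, one_mul, Nat.abs_cast]

theorem sum_range_stirlingFirst_div_factorial (n k : ℕ) :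
    ∑ j ∈ range (n + 1), (stirlingFirst j k : ℝ) / j.factorial =
      stirlingFirst (n + 1) (k + 1) / n.factorial := by
  induction n with
  | zero => simp [Nat.stirlingFirst_succ_succ]
  | succ n ih =>
    rw [sum_range_succ, ih, Nat.stirlingFirst_succ_succ (n + 1), Nat.factorial_succ]
    push_cast
    field_simp

/-- No integrability of `f` is assumed: if `∑ ∫ F i` diverges, both sides are `0` by the
junk-value conventions of `∫` and `∑'`. -/
theorem integral_eq_tsum_integral_of_hasSum_of_nonneg {α ι : Type*} [MeasurableSpace α]
    [Countable ι] {μ : Measure α} {F : ι → α → ℝ} {f : α → ℝ} (hF : ∀ i, 0 ≤ᵐ[μ] F i)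
    (hFi : ∀ i, Integrable (F i) μ) (hf : ∀ᵐ a ∂μ, HasSum (fun i => F i a) (f a)) :
    ∫ a, f a ∂μ = ∑' i, ∫ a, F i a ∂μ := by
  have hF' : ∀ᵐ a ∂μ, ∀ i, 0 ≤ F i a := ae_all_iff.2 hF
  have hf_nonneg : 0 ≤ᵐ[μ] f := by
    filter_upwards [hf, hF'] with a ha hFa using ha.nonneg hFa
  have hf_meas : AEStronglyMeasurable f μ :=
    aestronglyMeasurable_of_tendsto_ae _
      (fun s => Finset.aestronglyMeasurable_fun_sum s fun i _ => (hFi i).1) hf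
  have hlin : ∫⁻ a, ENNReal.ofReal (f a) ∂μ = ∑' i, ∫⁻ a, ENNReal.ofReal (F i a) ∂μ := by
    rw [← lintegral_tsum fun i => (hFi i).aemeasurable.ennreal_ofReal]
    refine lintegral_congr_ae ?_
    filter_upwards [hf, hF'] with a ha hFa
    rw [← ha.tsum_eq, ENNReal.ofReal_tsum_of_nonneg hFa ha.summable]
  rw [integral_eq_lintegral_of_nonneg_ae hf_nonneg hf_meas, hlin,
    ENNReal.tsum_toReal_eq fun i => ((hFi i).lintegral_lt_top).ne]
  exact tsum_congr fun i =>
    (integral_eq_lintegral_of_nonneg_ae (hF i) (hFi i).aestronglyMeasurable).symm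

theorem hasSum_sum_range_mul_pow {c : ℕ → ℝ} {s t : ℝ} (hc : ∀ n, 0 ≤ c n) (ht0 : 0 ≤ t)
    (ht1 : t < 1) (h : HasSum (fun n => c n * t ^ n) s) :
    HasSum (fun n => (∑ j ∈ range (n + 1), c j) * t ^ n) (s / (1 - t)) := by
  have hnorm : Summable fun n => ‖c n * t ^ n‖ :=
    h.summable.congr fun n => (Real.norm_of_nonneg (mul_nonneg (hc n) (pow_nonneg ht0 n))).symm
  have hcauchy := hasSum_sum_range_mul_of_summable_norm hnorm
    (summable_geometric_of_lt_one ht0 ht1).norm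
  rw [h.tsum_eq, tsum_geometric_of_lt_one ht0 ht1, ← div_eq_mul_inv] at hcauchy
  refine hcauchy.congr_fun fun n => ?_
  rw [sum_mul]
  refine sum_congr rfl fun j hj => ?_
  rw [mul_assoc, ← pow_add, Nat.add_sub_cancel' (Nat.le_of_lt_succ (mem_range.1 hj))]

theorem hasSum_integral_of_hasSum_pow {c : ℕ → ℝ} {f : ℝ → ℝ} {x : ℝ} (hc : ∀ n, 0 ≤ c n)
    (hx : 0 ≤ x) (hf : ∀ t ∈ Set.Icc 0 x, HasSum (fun n => c n * t ^ n) (f t)) :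
    HasSum (fun n => c n * (x ^ (n + 1) / (n + 1))) (∫ t in 0..x, f t) := by
  have hterm : ∀ n : ℕ, ∫ t in Set.Ioc 0 x, c n * t ^ n = c n * (x ^ (n + 1) / (n + 1)) := by
    intro n
    rw [← integral_of_le hx, intervalIntegral.integral_const_mul, integral_pow]
    simp
  have hsummable : Summable fun n => c n * (x ^ (n + 1) / (n + 1)) := by
    refine ((hf x ⟨hx, le_rfl⟩).summable.mul_left x).of_nonneg_of_le
      (fun n => by have := hc n; positivity) fun n => ?_
    rw [mul_left_comm, ← pow_succ']
    exact mul_le_mul_of_nonneg_left (div_le_self (by positivity) (by simp)) (hc n)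
  refine hsummable.hasSum_iff.2 ?_
  rw [integral_of_le hx, integral_eq_tsum_integral_of_hasSum_of_nonneg
    (F := fun n t => c n * t ^ n)]
  · exact tsum_congr fun n => (hterm n).symm
  · intro n
    filter_upwards [ae_restrict_mem measurableSet_Ioc] with t ht
    exact mul_nonneg (hc n) (pow_nonneg ht.1.le n)
  · exact fun n => (continuous_const.mul (continuous_pow n)).integrableOn_Ioc
  · filter_upwards [ae_restrict_mem measurableSet_Ioc] with t ht
    exact hf t (Set.Ioc_subset_Icc_self ht)

theorem integral_neg_log_one_sub_pow_div (k : ℕ) {x : ℝ} (hx : x < 1) :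
    ∫ t in 0..x, (-log (1 - t)) ^ k / (1 - t) = (-log (1 - x)) ^ (k + 1) / (k + 1) := by
  have hne : ∀ t ∈ Set.uIcc 0 x, 1 - t ≠ 0 := fun t ht =>
    sub_ne_zero.2 (ht.2.trans_lt (max_lt one_pos hx)).ne'
  have hderiv : ∀ t ∈ Set.uIcc 0 x, HasDerivAt (fun u => (-log (1 - u)) ^ (k + 1) / (k + 1))
      ((-log (1 - t)) ^ k / (1 - t)) t := by
    intro t ht
    have hlog : HasDerivAt (fun u => -log (1 - u)) (1 / (1 - t)) t := by
      refine (((hasDerivAt_id t).const_sub 1).log (hne t ht)).neg.congr_deriv ?_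
      simp only [id]
      ring
    refine ((hlog.pow (k + 1)).div_const ((k : ℝ) + 1)).congr_deriv ?_
    have : (k : ℝ) + 1 ≠ 0 := by positivity
    push_cast
    field_simp
  have hcont : ContinuousOn (fun t => (-log (1 - t)) ^ k / (1 - t)) (Set.uIcc 0 x) :=
    ((continuousOn_const.sub continuousOn_id).log hne).neg.pow k |>.div
      (continuousOn_const.sub continuousOn_id) hne
  rw [integral_eq_sub_of_hasDerivAt hderiv hcont.intervalIntegrable]
  simp

theorem image_exp_neg_Ioi_zero : (fun t => exp (-t)) '' Set.Ioi 0 = Set.Ioo 0 1 := by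
  ext y
  constructor
  · rintro ⟨t, ht, rfl⟩
    exact ⟨exp_pos _, exp_lt_one_iff.2 (neg_lt_zero.2 ht)⟩
  · rintro ⟨hy0, hy1⟩
    exact ⟨-log y, neg_pos.2 (log_neg hy0 hy1), by simp [exp_log hy0]⟩

theorem integral_pow_mul_neg_log_pow (n m : ℕ) :
    ∫ x in Set.Ioo 0 1, x ^ n * (-log x) ^ m = m.factorial / (n + 1) ^ (m + 1) := by
  have hsubst := integral_image_eq_integral_abs_deriv_smul (measurableSet_Ioi (a := 0))
    (fun t _ => (hasDerivAt_neg t).exp.hasDerivWithinAt)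
    (fun a _ b _ h => neg_injective (exp_injective h)) fun x : ℝ => x ^ n * (-log x) ^ m
  rw [image_exp_neg_Ioi_zero] at hsubst
  rw [hsubst]
  have hgamma : ∀ t ∈ Set.Ioi (0 : ℝ), |exp (-t) * -1| • (exp (-t) ^ n * (-log (exp (-t))) ^ m) =
      t ^ ((m + 1 : ℝ) - 1) * exp (-((n + 1) * t)) := by
    intro t _
    rw [add_sub_cancel_right, rpow_natCast, log_exp, neg_neg, smul_eq_mul, mul_neg_one, abs_neg,
      abs_of_pos (exp_pos _), ← exp_nat_mul, show -((n + 1) * t) = n * -t + -t by ring, exp_add]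
    ring
  rw [setIntegral_congr_fun measurableSet_Ioi hgamma,
    integral_rpow_mul_exp_neg_mul_Ioi (by positivity) (by positivity)]
  rw [Gamma_nat_eq_factorial, ← Nat.cast_succ m, rpow_natCast, one_div, inv_pow]
  field_simp

theorem integrableOn_pow_mul_neg_log_pow (n m : ℕ) :
    IntegrableOn (fun x => x ^ n * (-log x) ^ m) (Set.Ioo 0 1) :=
  Integrable.of_integral_ne_zero <| by
    rw [integral_pow_mul_neg_log_pow]; positivity

theorem hasSum_stirlingFirst_div_factorial_mul_pow (k : ℕ) {x : ℝ} (hx0 : 0 ≤ x) (hx1 : x < 1) :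
    HasSum (fun n => (stirlingFirst n k : ℝ) / n.factorial * x ^ n)
      ((-log (1 - x)) ^ k / k.factorial) := by
  induction k generalizing x with
  | zero =>
    convert hasSum_single 0 fun n hn => ?_ using 1
    · simp
    · obtain ⟨n, rfl⟩ := Nat.exists_eq_succ_of_ne_zero hn
      simp
  | succ k ih =>
    have hpartial : ∀ t ∈ Set.Icc 0 x, HasSum
        (fun n => (∑ j ∈ range (n + 1), (stirlingFirst j k : ℝ) / j.factorial) * t ^ n)
        ((-log (1 - t)) ^ k / k.factorial / (1 - t)) := fun t ht =>
      hasSum_sum_range_mul_pow (fun n => by positivity) ht.1 (ht.2.trans_lt hx1)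
        (ih ht.1 (ht.2.trans_lt hx1))
    have hint := hasSum_integral_of_hasSum_pow (fun n => by positivity) hx0 hpartial
    have hval : ∫ t in 0..x, (-log (1 - t)) ^ k / k.factorial / (1 - t) =
        (-log (1 - x)) ^ (k + 1) / (k + 1).factorial := by
      simp_rw [div_right_comm _ (k.factorial : ℝ)]
      rw [intervalIntegral.integral_div, integral_neg_log_one_sub_pow_div k hx1,
        Nat.factorial_succ]
      push_cast
      field_simp
    rw [hval] at hint
    rw [← hasSum_nat_add_iff' 1]
    simp only [range_one, sum_singleton, Nat.stirlingFirst_zero_succ, CharP.cast_eq_zero,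
      zero_div, zero_mul, sub_zero]
    refine hint.congr_fun fun n => ?_
    rw [sum_range_stirlingFirst_div_factorial, Nat.factorial_succ]
    push_cast
    field_simp

theorem tsum_nat_add_eq_of_forall_lt {M : Type*} [AddCommMonoid M] [TopologicalSpace M]
    {f : ℕ → M} {k : ℕ} (hf : ∀ n < k, f n = 0) : ∑' n, f (n + k) = ∑' n, f n :=
  (add_left_injective k).tsum_eq fun n hn =>
    ⟨n - k, Nat.sub_add_cancel (not_lt.1 fun h => hn (hf n h))⟩

theorem hasSum_stirlingFirst_mul_pow_mul_neg_log_pow {k : ℕ} (hk : 1 ≤ k) (m : ℕ) {x : ℝ}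
    (hx0 : 0 < x) (hx1 : x < 1) :
    HasSum (fun n => (stirlingFirst (n + 1) k : ℝ) / (n + 1).factorial * (x ^ n * (-log x) ^ m))
      ((-log (1 - x)) ^ k / k.factorial * (-log x) ^ m / x) := by
  have h := (hasSum_nat_add_iff' 1).2 (hasSum_stirlingFirst_div_factorial_mul_pow k hx0.le hx1)
  simp only [range_one, sum_singleton, Nat.stirlingFirst_eq_zero_of_lt hk, CharP.cast_eq_zero,
    zero_div, zero_mul, sub_zero] at h
  rw [mul_div_assoc]
  refine (h.mul_right ((-log x) ^ m / x)).congr_fun fun n => ?_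
  field_simp
  ring

theorem integral_log_one_sub_pow_mul_log_pow_div {k : ℕ} (hk : 1 ≤ k) (m : ℕ) :
    ∫ x in (0 : ℝ)..1, log (1 - x) ^ k * log x ^ m / x =
      (-1) ^ (m + k) * m.factorial * k.factorial *
        ∑' n, (stirlingFirst n k : ℝ) / (n.factorial * (n : ℝ) ^ (m + 1)) := by
  have hsign : ∀ x ∈ Set.Ioo (0 : ℝ) 1, log (1 - x) ^ k * log x ^ m / x =
      (-1) ^ (m + k) * k.factorial * ((-log (1 - x)) ^ k / k.factorial * (-log x) ^ m / x) := by
    intro x _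
    calc log (1 - x) ^ k * log x ^ m / x = (-1 * -log (1 - x)) ^ k * (-1 * -log x) ^ m / x := by
          simp
      _ = _ := by
          rw [mul_pow, mul_pow, pow_add]
          field_simp
  have hterm_nonneg : ∀ n, 0 ≤ᵐ[volume.restrict (Set.Ioo 0 1)]
      fun x => (stirlingFirst (n + 1) k : ℝ) / (n + 1).factorial * (x ^ n * (-log x) ^ m) := by
    intro n
    filter_upwards [ae_restrict_mem measurableSet_Ioo] with x hx
    have := neg_nonneg.2 (log_nonpos hx.1.le hx.2.le)
    have := hx.1.le
    positivity
  calc ∫ x in (0 : ℝ)..1, log (1 - x) ^ k * log x ^ m / x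
      = ∫ x in Set.Ioo 0 1, (-1) ^ (m + k) * k.factorial *
          ((-log (1 - x)) ^ k / k.factorial * (-log x) ^ m / x) := by
        rw [integral_of_le zero_le_one, ← setIntegral_congr_set Ioo_ae_eq_Ioc]
        exact setIntegral_congr_fun measurableSet_Ioo hsign
    _ = (-1) ^ (m + k) * k.factorial * ∑' n, ∫ x in Set.Ioo 0 1,
          (stirlingFirst (n + 1) k : ℝ) / (n + 1).factorial * (x ^ n * (-log x) ^ m) := by
        rw [MeasureTheory.integral_const_mul,
          integral_eq_tsum_integral_of_hasSum_of_nonneg hterm_nonneg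
            (fun n => (integrableOn_pow_mul_neg_log_pow n m).const_mul _)
            ((ae_restrict_mem measurableSet_Ioo).mono fun x hx =>
              hasSum_stirlingFirst_mul_pow_mul_neg_log_pow hk m hx.1 hx.2)]
    _ = (-1) ^ (m + k) * k.factorial * ∑' n, m.factorial *
          ((stirlingFirst (n + 1) k : ℝ) / ((n + 1).factorial * ((n + 1 : ℕ) : ℝ) ^ (m + 1))) := by
        congr 1
        refine tsum_congr fun n => ?_
        rw [MeasureTheory.integral_const_mul, integral_pow_mul_neg_log_pow]
        push_cast
        field_simp
    _ = _ := by
        rw [tsum_mul_left, tsum_nat_add_eq_of_forall_lt (k := 1)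
          (f := fun n => (stirlingFirst n k : ℝ) / (n.factorial * (n : ℝ) ^ (m + 1)))]
        · ring
        · intro n hn
          simp [Nat.lt_one_iff.1 hn]

/-- For integers `k ≥ 1` and `m ≥ 0`, the integral
`Ω(k,m) = ∫_0^1 lnᵏ(1-x) lnᵐ(x)/x dx` satisfies
`Ω(k,m) = (-1)^{m+k} m! k! Σ_{n=k}^∞ |S_1(n,k)|/(n!·n^{m+1})`, where `S_1(n,l)` are the
Stirling numbers of the first kind, defined by
`x(x-1)⋯(x-n+1) = Σ_{l=1}^n S_1(n,l) x^l`. -/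
theorem stmt15 (S1 : ℕ → ℕ → ℝ)
    (hS1 : ∀ n : ℕ, 1 ≤ n → ∀ x : ℝ,
      ∏ i ∈ Finset.range n, (x - (i : ℝ)) = ∑ l ∈ Finset.Icc 1 n, S1 n l * x ^ l)
    (k m : ℕ) (hk : 1 ≤ k) :
    ∫ x in (0:ℝ)..1, (Real.log (1 - x)) ^ k * (Real.log x) ^ m / x =
      (-1 : ℝ) ^ (m + k) * (m.factorial : ℝ) * (k.factorial : ℝ) *
        ∑' n : ℕ, |S1 (n + k) k| /
          (((n + k).factorial : ℝ) * ((n : ℝ) + k) ^ (m + 1)) := by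
  have hS : ∀ n, |S1 (n + k) k| = stirlingFirst (n + k) k := fun n =>
    abs_eq_stirlingFirst_of_prod_eq (hS1 (n + k) (by omega)) hk (by omega)
  simp_rw [integral_log_one_sub_pow_mul_log_pow_div hk m, hS]
  rw [← tsum_nat_add_eq_of_forall_lt (k := k) fun n hn => by
    rw [Nat.stirlingFirst_eq_zero_of_lt hn, Nat.cast_zero, zero_div]]
  simp only [Nat.cast_add]
end

section
/- For integers k ≥ 1 and m ≥ 0, the integral Ω(k,m) := ∫_0^1 ln^k(1−x)·ln^m(x)/x dx satisfies the duality Ω(k,m) = (k/(m+1))·Ω(m+1, k−1). -/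
/-!
Let `F x = log x ^ (m + 1) * log (1 - x) ^ k / (m + 1)`. On `(0, 1)` its derivative is the
integrand of `Ω(k, m)` minus `k / (m + 1)` times
`log x ^ (m + 1) * log (1 - x) ^ (k - 1) / (1 - x)`, the integrand of `Ω(m + 1, k - 1)`
reflected by `x ↦ 1 - x`. Since `|log (1 - x)| ≤ 2 x` near `0` and `x |log x| ^ n → 0`, `F`
tends to `0` at both endpoints, so the fundamental theorem of calculus for improper integrals
gives the duality. Integrability comes from `|log x| ≤ x ^ (-s) / s`.
-/

open Real intervalIntegral

open MeasureTheory Set Filter Topology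

lemma abs_log_le_rpow_neg_div {x s : ℝ} (hx0 : 0 < x) (hx1 : x ≤ 1) (hs : 0 < s) :
    |log x| ≤ x ^ (-s) / s := by
  rw [abs_of_nonpos (log_nonpos hx0.le hx1), ← log_inv, rpow_neg hx0.le, ← inv_rpow hx0.le]
  exact log_le_rpow_div (inv_nonneg.2 hx0.le) hs

lemma integrableOn_abs_log_pow_Ioc (n : ℕ) :
    IntegrableOn (fun x => |log x| ^ n) (Ioc (0:ℝ) 1) := by
  set s : ℝ := ((n : ℝ) + 1)⁻¹
  have hs : 0 < s := by positivity
  have hsn : -1 < -(s * n) := by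
    rw [neg_lt_neg_iff, inv_mul_lt_iff₀ (by positivity)]
    linarith
  have hdom : IntegrableOn (fun x : ℝ => s⁻¹ ^ n * x ^ (-(s * n))) (Ioc (0:ℝ) 1) := by
    refine Integrable.const_mul ?_ _
    exact (intervalIntegrable_iff_integrableOn_Ioc_of_le zero_le_one).1
      (intervalIntegral.intervalIntegrable_rpow' hsn)
  refine hdom.mono' (measurable_log.abs.pow_const n).aestronglyMeasurable.restrict ?_
  refine (ae_restrict_iff' measurableSet_Ioc).2 (Eventually.of_forall fun x ⟨hx0, hx1⟩ => ?_)
  rw [norm_pow, norm_eq_abs, abs_abs]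
  calc |log x| ^ n ≤ (x ^ (-s) / s) ^ n :=
        pow_le_pow_left₀ (abs_nonneg _) (abs_log_le_rpow_neg_div hx0 hx1 hs) n
    _ = s⁻¹ ^ n * x ^ (-(s * n)) := by
        rw [div_eq_inv_mul, mul_pow, ← rpow_natCast (x ^ (-s)), ← rpow_mul hx0.le]
        ring_nf

lemma abs_log_one_sub_pow_le {x : ℝ} {p : ℕ} (hx0 : 0 ≤ x) (hx : x ≤ 1 / 2) (hp : 1 ≤ p) :
    |log (1 - x)| ^ p ≤ 2 * x := by
  have h1x : 0 < 1 - x := by linarith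
  have hlog : |log (1 - x)| ≤ 2 * x := by
    rw [abs_of_nonpos (log_nonpos h1x.le (by linarith))]
    have hlog_ge := one_sub_inv_le_log_of_pos h1x
    have hinv : (1 - x)⁻¹ ≤ 2 := by rw [inv_le_comm₀ h1x two_pos]; linarith
    nlinarith [inv_mul_cancel₀ h1x.ne']
  calc |log (1 - x)| ^ p ≤ (2 * x) ^ p := pow_le_pow_left₀ (abs_nonneg _) hlog p
    _ ≤ (2 * x) ^ 1 := pow_le_pow_of_le_one (by positivity) (by linarith) hp
    _ = 2 * x := pow_one _

lemma abs_log_one_sub_pow_mul_log_pow_div_le {x : ℝ} {p : ℕ} (q : ℕ)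
    (hx : x ∈ Ioo (0:ℝ) 1) (hp : 1 ≤ p) :
    |log (1 - x) ^ p * log x ^ q / x| ≤ 2 * (|log x| ^ q + |log (1 - x)| ^ p) := by
  obtain ⟨hx0, hx1⟩ := hx
  rw [abs_div, abs_mul, abs_pow, abs_pow, abs_of_pos hx0, div_le_iff₀ hx0]
  rcases le_total x (1 / 2) with hx2 | hx2
  -- near `0` the factor `log (1 - x) ^ p` absorbs `1 / x`; near `1`, `log x` is bounded
  · have hsmall := abs_log_one_sub_pow_le hx0.le hx2 hp
    nlinarith [pow_nonneg (abs_nonneg (log x)) q, pow_nonneg (abs_nonneg (log (1 - x))) p]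
  · have hlog : |log x| ^ q ≤ 1 := by
      refine pow_le_one₀ (abs_nonneg _) ?_
      have hlog_le :=
        abs_log_one_sub_pow_le (x := 1 - x) (p := 1) (by linarith) (by linarith) le_rfl
      rw [sub_sub_cancel, pow_one] at hlog_le
      linarith
    nlinarith [pow_nonneg (abs_nonneg (log x)) q, pow_nonneg (abs_nonneg (log (1 - x))) p]

lemma intervalIntegrable_log_one_sub_pow_mul_log_pow_div {p : ℕ} (q : ℕ) (hp : 1 ≤ p) :
    IntervalIntegrable (fun x => log (1 - x) ^ p * log x ^ q / x) volume 0 1 := by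
  have hlog : IntegrableOn (fun x => |log x| ^ q) (Ioc (0:ℝ) 1) := integrableOn_abs_log_pow_Ioc q
  have hlog_refl : IntegrableOn (fun x => |log (1 - x)| ^ p) (Ioc (0:ℝ) 1) := by
    have := ((intervalIntegrable_iff_integrableOn_Ioc_of_le zero_le_one).2
      (integrableOn_abs_log_pow_Ioc p)).comp_sub_left 1
    rw [sub_zero, sub_self] at this
    exact (intervalIntegrable_iff_integrableOn_Ioc_of_le zero_le_one).1 this.symm
  rw [intervalIntegrable_iff_integrableOn_Ioc_of_le zero_le_one,
    integrableOn_Ioc_iff_integrableOn_Ioo]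
  have hdom := ((hlog.mono_set Ioo_subset_Ioc_self).add
    (hlog_refl.mono_set Ioo_subset_Ioc_self)).const_mul 2
  refine hdom.mono' ?_ ?_
  · exact ((((measurable_log.comp (measurable_const.sub measurable_id)).pow_const p).mul
      (measurable_log.pow_const q)).div measurable_id).aestronglyMeasurable.restrict
  · exact (ae_restrict_iff' measurableSet_Ioo).2 (Eventually.of_forall fun x hx =>
      abs_log_one_sub_pow_mul_log_pow_div_le q hx hp)

lemma tendsto_mul_abs_log_pow_nhdsGT_zero (n : ℕ) :
    Tendsto (fun t => t * |log t| ^ n) (𝓝[>] 0) (𝓝 0) := by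
  refine (isLittleO_abs_log_rpow_rpow_nhdsGT_zero n neg_one_lt_zero).tendsto_div_nhds_zero.congr'
    (eventually_mem_nhdsWithin.mono fun t (ht : 0 < t) => ?_)
  rw [rpow_natCast, rpow_neg_one, div_inv_eq_mul, mul_comm]

lemma tendsto_log_one_sub_pow_mul_log_pow_nhdsGT_zero {p : ℕ} (q : ℕ) (hp : 1 ≤ p) :
    Tendsto (fun t => log (1 - t) ^ p * log t ^ q) (𝓝[>] 0) (𝓝 0) := by
  refine squeeze_zero_norm' ?_ ((tendsto_mul_abs_log_pow_nhdsGT_zero q).const_mul 2 |>.trans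
    (by rw [mul_zero]))
  filter_upwards [Ioo_mem_nhdsGT (by norm_num : (0:ℝ) < 1 / 2)] with t ⟨ht0, ht⟩
  rw [norm_mul, norm_pow, norm_pow, norm_eq_abs, norm_eq_abs, ← mul_assoc]
  exact mul_le_mul_of_nonneg_right (abs_log_one_sub_pow_le ht0.le ht.le hp) (by positivity)

lemma hasDerivAt_log_pow_mul_log_one_sub_pow (p q : ℕ) {x : ℝ} (hx : x ∈ Ioo (0:ℝ) 1) :
    HasDerivAt (fun x => log x ^ q * log (1 - x) ^ p)
      (q * log x ^ (q - 1) * x⁻¹ * log (1 - x) ^ p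
        - log x ^ q * (p * log (1 - x) ^ (p - 1) * (1 - x)⁻¹)) x := by
  have hlog : HasDerivAt log x⁻¹ x := hasDerivAt_log hx.1.ne'
  have hlog_one_sub : HasDerivAt (fun x => log (1 - x)) (-(1 - x)⁻¹) x := by
    simpa [div_eq_inv_mul] using ((hasDerivAt_id x).const_sub 1).log (sub_pos.2 hx.2).ne'
  exact ((hlog.fun_pow q).mul (hlog_one_sub.fun_pow p)).congr_deriv (by ring)

/-- For integers `k ≥ 1` and `m ≥ 0`, the integral
`Ω(k,m) = ∫_0^1 lnᵏ(1-x) lnᵐ(x)/x dx` satisfies the duality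
`Ω(k,m) = (k/(m+1)) Ω(m+1, k-1)`. -/
theorem stmt16 (k m : ℕ) (hk : 1 ≤ k) :
    ∫ x in (0:ℝ)..1, (Real.log (1 - x)) ^ k * (Real.log x) ^ m / x =
      ((k : ℝ) / ((m : ℝ) + 1)) *
        ∫ x in (0:ℝ)..1, (Real.log (1 - x)) ^ (m + 1) * (Real.log x) ^ (k - 1) / x := by
  set c : ℝ := (k : ℝ) / ((m : ℝ) + 1)
  set g : ℝ → ℝ := fun x => log (1 - x) ^ (m + 1) * log x ^ (k - 1) / x
  set F : ℝ → ℝ := fun x => ((m : ℝ) + 1)⁻¹ * (log x ^ (m + 1) * log (1 - x) ^ k)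
  have hf := intervalIntegrable_log_one_sub_pow_mul_log_pow_div m hk
  have hg_refl : IntervalIntegrable (fun x => g (1 - x)) volume 0 1 := by
    have hg : IntervalIntegrable g volume 0 1 :=
      intervalIntegrable_log_one_sub_pow_mul_log_pow_div (k - 1) (Nat.le_add_left 1 m)
    simpa only [sub_zero, sub_self] using (hg.comp_sub_left 1).symm
  have hderiv : ∀ x ∈ Ioo (0:ℝ) 1,
      HasDerivAt F (log (1 - x) ^ k * log x ^ m / x - c * g (1 - x)) x := fun x hx =>
    ((hasDerivAt_log_pow_mul_log_one_sub_pow k (m + 1) hx).const_mul _).congr_deriv (by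
      simp only [g, c, sub_sub_cancel, add_tsub_cancel_right]
      push_cast
      field_simp)
  have hF0 : Tendsto F (𝓝[>] 0) (𝓝 0) := by
    simpa [F, mul_comm (log _ ^ (m + 1))] using
      (tendsto_log_one_sub_pow_mul_log_pow_nhdsGT_zero (m + 1) hk).const_mul ((m : ℝ) + 1)⁻¹
  have hF1 : Tendsto F (𝓝[<] 1) (𝓝 0) := by
    have hrefl : Tendsto (fun x : ℝ => 1 - x) (𝓝[<] 1) (𝓝[>] 0) :=
      (map_subLeft_nhdsLT.trans (by rw [sub_self])).le
    simpa [F, Function.comp_def] using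
      ((tendsto_log_one_sub_pow_mul_log_pow_nhdsGT_zero k (Nat.le_add_left 1 m)).const_mul
        ((m : ℝ) + 1)⁻¹).comp hrefl
  have hFTC := integral_eq_sub_of_hasDerivAt_of_tendsto zero_lt_one hderiv
    (hf.sub (hg_refl.const_mul c)) hF0 hF1
  rwa [integral_sub hf (hg_refl.const_mul c), intervalIntegral.integral_const_mul,
    integral_comp_sub_left, sub_zero, sub_self, sub_self, sub_eq_zero] at hFTC
end

section
/- For n ≥ 0 and m ≥ 0, |S_1(n+1, m+1)|/n! = P_m(H_n^{(1)}, −H_n^{(2)}, …, (−1)^{m−1} H_n^{(m)}), where P_m are the modified Bell polynomials and H_n^{(j)} = Σ_{k=1}^n k^{−j}. -/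
/-!
Both sides are `e_m(1, 1/2, …, 1/n)`, the elementary symmetric function of the reciprocals.
The `m`-th modified Bell polynomial satisfies `m P_m = Σ_{j=1}^m x_j P_{m-j}`, which for
`x_j = (-1)^{j-1} p_j` (signed power sums) is Newton's identity for `e_m`. On the other side,
`x(x-1)⋯(x-n) = x ∏_{k=1}^n (x - k)`, so by Vieta `|S_1(n+1, m+1)| = e_{n-m}(1, …, n)`, and
passing to complements of index sets gives `e_{n-m}(1, …, n) = n! e_m(1, 1/2, …, 1/n)`.
-/

open Real Finset

/-- The modified Bell polynomials `P_m`, evaluated on a sequence `x`, defined via the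
generating function `exp(Σ_{n≥1} x_n tⁿ/n) = Σ_{m≥0} P_m(x_1,…,x_m) tᵐ`, equivalently
by the recurrence `P_0 = 1`, `P_m = (1/m) Σ_{j=1}^m x_j P_{m-j}`. -/
noncomputable def bellP (x : ℕ → ℝ) : ℕ → ℝ
  | 0 => 1
  | m + 1 => (1 / ((m : ℝ) + 1)) *
      ∑ k ∈ Finset.range (m + 1), x (k + 1) * bellP x (m - k)
  decreasing_by all_goals (simp_wf; try omega)

open Polynomial

theorem bellP_eq_of_recurrence (x y : ℕ → ℝ) (h0 : y 0 = 1)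
    (hsucc : ∀ m : ℕ, ((m : ℝ) + 1) * y (m + 1) =
      ∑ k ∈ range (m + 1), x (k + 1) * y (m - k)) :
    bellP x = y := by
  funext m
  induction m using Nat.strong_induction_on with
  | _ m ih =>
    cases m with
    | zero => rw [bellP, h0]
    | succ m =>
      have hsum : ∑ k ∈ range (m + 1), x (k + 1) * bellP x (m - k) =
          ∑ k ∈ range (m + 1), x (k + 1) * y (m - k) :=
        sum_congr rfl fun k _ => by rw [ih (m - k) (by omega)]
      rw [bellP, hsum, ← hsucc, one_div, inv_mul_cancel_left₀ (by positivity)]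

namespace MvPolynomial

theorem succ_mul_esymm_succ_eq_sum (σ R : Type*) [Fintype σ] [CommRing R] (m : ℕ) :
    ((m : MvPolynomial σ R) + 1) * esymm σ R (m + 1) =
      ∑ k ∈ range (m + 1), (-1) ^ k * psum σ R (k + 1) * esymm σ R (m - k) := by
  have newton := mul_esymm_eq_sum σ R (m + 1)
  push_cast at newton
  rw [newton, sum_filter, Nat.sum_antidiagonal_succ', if_neg (lt_irrefl _), zero_add,
    ← Nat.sum_antidiagonal_swap, Nat.sum_antidiagonal_eq_sum_range_succ_mk, mul_sum]
  refine sum_congr rfl fun k hk => ?_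
  have hk : k ≤ m := mem_range_succ_iff.mp hk
  simp only [Prod.swap_prod_mk, if_pos (show m - k < m + 1 by omega)]
  rw [← mul_assoc, ← mul_assoc, ← pow_add,
    show m + 1 + 1 + (m - k) = 2 * (m - k + 1) + k by omega, pow_add, pow_mul]
  ring

end MvPolynomial

theorem Finset.succ_mul_esymm_map_succ_eq_sum {σ R : Type*} [CommRing R] (s : Finset σ)
    (f : σ → R) (m : ℕ) :
    ((m : R) + 1) * (s.val.map f).esymm (m + 1) =
      ∑ k ∈ range (m + 1),
        (-1) ^ k * (∑ i ∈ s, f i ^ (k + 1)) * (s.val.map f).esymm (m - k) := by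
  let φ := MvPolynomial.aeval (R := ℤ) fun i : s => f i
  have hesymm (k : ℕ) : φ (MvPolynomial.esymm s ℤ k) = (s.val.map f).esymm k := by
    rw [MvPolynomial.aeval_esymm_eq_multiset_esymm, univ_eq_attach]
    exact congrArg (Multiset.esymm · k) (Multiset.attach_map_val' s.val f)
  have hpsum (k : ℕ) : φ (MvPolynomial.psum s ℤ k) = ∑ i ∈ s, f i ^ k := by
    simp only [φ, MvPolynomial.psum, map_sum, map_pow, MvPolynomial.aeval_X]
    exact sum_coe_sort s fun i => f i ^ k
  simpa only [map_mul, map_add, map_natCast, map_one, map_sum, map_pow, map_neg, hesymm, hpsum]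
    using congrArg φ (MvPolynomial.succ_mul_esymm_succ_eq_sum s ℤ m)

theorem bellP_signed_powerSum_eq_esymm {σ : Type*} (s : Finset σ) (f : σ → ℝ) :
    bellP (fun j => (-1) ^ (j - 1) * ∑ i ∈ s, f i ^ j) = (s.val.map f).esymm := by
  refine bellP_eq_of_recurrence _ _ (by simp [Multiset.esymm]) fun m => ?_
  simp only [Finset.succ_mul_esymm_map_succ_eq_sum, Nat.add_sub_cancel]

theorem Polynomial.coeff_eq_of_eval_eq_sum {R : Type*} [CommRing R] [IsDomain R] [Infinite R]
    {p : R[X]} {N : ℕ} (a : ℕ → R) (heval : ∀ x, p.eval x = ∑ l ∈ Icc 1 N, a l * x ^ l)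
    (ha : ∀ l, N < l → a l = 0) {l : ℕ} (hl : 1 ≤ l) :
    p.coeff l = a l := by
  have hp : p = ∑ l ∈ Icc 1 N, C (a l) * X ^ l :=
    Polynomial.funext fun x => by simp [heval, eval_finsetSum]
  rw [hp, finsetSum_coeff]
  simp only [coeff_C_mul, coeff_X_pow, mul_ite, mul_one, mul_zero, sum_ite_eq, mem_Icc]
  split_ifs with h
  · rfl
  · exact (ha l (by omega)).symm

theorem Multiset.esymm_nonneg {R : Type*} [CommSemiring R] [PartialOrder R] [IsOrderedRing R]
    (s : Multiset R) (hs : ∀ a ∈ s, 0 ≤ a) (k : ℕ) : 0 ≤ s.esymm k := by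
  refine Multiset.sum_nonneg fun x hx => ?_
  obtain ⟨t, ht, rfl⟩ := Multiset.mem_map.mp hx
  exact Multiset.prod_nonneg fun a ha =>
    hs a (Multiset.mem_of_le (Multiset.mem_powersetCard.mp ht).1 ha)

theorem Multiset.esymm_eq_zero_of_card_lt {R : Type*} [CommSemiring R] (s : Multiset R) {k : ℕ}
    (hk : card s < k) : s.esymm k = 0 := by
  simp [Multiset.esymm, Multiset.powersetCard_eq_empty _ hk]

theorem Finset.coeff_prod_X_sub_C {σ R : Type*} [CommRing R] (s : Finset σ) (f : σ → R)
    {k : ℕ} (hk : k ≤ #s) :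
    (∏ i ∈ s, (X - C (f i))).coeff k = (-1) ^ (#s - k) * (s.val.map f).esymm (#s - k) := by
  have h := Multiset.prod_X_sub_C_coeff (s.val.map f) (k := k) (by rwa [Multiset.card_map])
  rw [Multiset.map_map, Multiset.card_map] at h
  exact h

theorem Finset.esymm_card_sub_eq_prod_mul_esymm_inv {σ K : Type*} [DecidableEq σ] [Field K]
    (s : Finset σ) (f : σ → K) (hf : ∀ i ∈ s, f i ≠ 0) {m : ℕ} (hm : m ≤ #s) :
    (s.val.map f).esymm (#s - m) =
      (∏ i ∈ s, f i) * (s.val.map fun i => (f i)⁻¹).esymm m := by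
  have sdiff_mem {k l : ℕ} (hkl : k + l = #s) {t : Finset σ} (ht : t ∈ s.powersetCard k) :
      s \ t ∈ s.powersetCard l := by
    obtain ⟨hts, hcard⟩ := mem_powersetCard.mp ht
    exact mem_powersetCard.mpr ⟨sdiff_subset, by rw [card_sdiff_of_subset hts]; omega⟩
  rw [esymm_map_val, esymm_map_val, mul_sum]
  refine sum_nbij' (s \ ·) (s \ ·) (fun t => sdiff_mem (by omega)) (fun t => sdiff_mem (by omega))
    (fun t ht => sdiff_sdiff_eq_self (mem_powersetCard.mp ht).1)
    (fun t ht => sdiff_sdiff_eq_self (mem_powersetCard.mp ht).1) fun t ht => ?_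
  have hts := (mem_powersetCard.mp ht).1
  have hprod_ne_zero : ∏ i ∈ s \ t, f i ≠ 0 :=
    prod_ne_zero_iff.mpr fun i hi => hf i (mem_sdiff.mp hi).1
  rw [← prod_sdiff hts, prod_inv_distrib]
  field_simp

theorem coeff_succ_prod_range_X_sub_C_eq_factorial_mul_esymm (n m : ℕ) (hm : m ≤ n) :
    (∏ i ∈ range (n + 1), (X - C (i : ℝ))).coeff (m + 1) =
      (-1) ^ (n - m) * n.factorial *
        ((range n).val.map fun k : ℕ => ((k : ℝ) + 1)⁻¹).esymm m := by
  have hfac : ∏ k ∈ range n, ((k : ℝ) + 1) = n.factorial := by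
    exact_mod_cast prod_range_add_one_eq_factorial n
  rw [prod_range_succ', Nat.cast_zero, C_0, sub_zero, mul_comm, coeff_X_mul]
  push_cast
  rw [(range n).coeff_prod_X_sub_C (fun k : ℕ => (k : ℝ) + 1) (by simpa),
    esymm_card_sub_eq_prod_mul_esymm_inv _ _ (fun k _ => by positivity) (by simpa), card_range,
    hfac]
  ring

/-- For `n ≥ 0` and `m ≥ 0`,
`|S_1(n+1, m+1)|/n! = P_m(H_n^{(1)}, -H_n^{(2)}, …, (-1)^{m-1} H_n^{(m)})`, where `S_1`
are the Stirling numbers of the first kind (defined by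
`x(x-1)⋯(x-n+1) = Σ_{l=1}^n S_1(n,l) x^l`, with `S_1(n,l) = 0` for `l > n`), `P_m` are
the modified Bell polynomials and `H_n^{(j)} = Σ_{k=1}^n k^{-j}`. -/
theorem stmt18 (S1 : ℕ → ℕ → ℝ)
    (hS1 : ∀ n : ℕ, 1 ≤ n → ∀ x : ℝ,
      ∏ i ∈ Finset.range n, (x - (i : ℝ)) = ∑ l ∈ Finset.Icc 1 n, S1 n l * x ^ l)
    (hS1zero : ∀ n l : ℕ, n < l → S1 n l = 0)
    (H : ℕ → ℕ → ℝ)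
    (hH : ∀ n j : ℕ, H n j = ∑ k ∈ Finset.range n, 1 / ((k : ℝ) + 1) ^ j)
    (n m : ℕ) :
    |S1 (n + 1) (m + 1)| / (n.factorial : ℝ) =
      bellP (fun j => (-1 : ℝ) ^ (j - 1) * H n j) m := by
  have hH' : (fun j => (-1 : ℝ) ^ (j - 1) * H n j) =
      fun j => (-1) ^ (j - 1) * ∑ k ∈ range n, ((k : ℝ) + 1)⁻¹ ^ j := by
    funext j
    simp only [hH, one_div, inv_pow]
  rw [hH', bellP_signed_powerSum_eq_esymm]
  rcases le_or_gt m n with hm | hm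
  · have hS1_eq_coeff :
        S1 (n + 1) (m + 1) = (∏ i ∈ range (n + 1), (X - C (i : ℝ))).coeff (m + 1) :=
      (coeff_eq_of_eval_eq_sum (S1 (n + 1))
        (fun x => by simpa [eval_prod] using hS1 (n + 1) (by omega) x) (hS1zero (n + 1))
        (by omega)).symm
    have hesymm_nonneg : 0 ≤ ((range n).val.map fun k : ℕ => ((k : ℝ) + 1)⁻¹).esymm m :=
      Multiset.esymm_nonneg _
        (by simp only [Multiset.mem_map]; rintro _ ⟨k, -, rfl⟩; positivity) m
    rw [hS1_eq_coeff, coeff_succ_prod_range_X_sub_C_eq_factorial_mul_esymm n m hm, abs_mul,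
      abs_mul, abs_pow, abs_neg, abs_one, one_pow, one_mul, Nat.abs_cast,
      abs_of_nonneg hesymm_nonneg, mul_div_cancel_left₀ _ (by positivity)]
  · rw [hS1zero _ _ (by omega), abs_zero, zero_div,
      Multiset.esymm_eq_zero_of_card_lt _ (by simpa using hm)]
end
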